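/- Policy gradient with marginal gains (Theorem 4.1): under the policy parameterization hypotheses, and assuming ∑_{a ∈ A} π θ h s' a = 1 for every θ ∈ ℝ^d, h, s', for every choice of baseline b assigning a real number to each trajectory prefix, the map θ ↦ J(θ) is Fréchet-differentiable at θ₀ with derivative equal to ∑_τ f(τ; π θ₀) · ∑_{i=0}^{H−1} ( ∑_{j=i}^{H−1} (F(τ_{0:j+1}) − F(τ_{0:j})) − b(prefix of τ up to step i) ) • ( (π θ₀ i (s i) (a i))⁻¹ • D i (s i) (a i) ), where the outer sum ranges over all trajectories τ = (s, a) and τ_{0:j} := {(l, s l) : l ≤ j}. -/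

import Mathlib

open Finset

/-- A trajectory: states at times `0,…,H` and actions at times `0,…,H−1`. -/
abbrev Traj (S A : Type) (H : ℕ) : Type := (Fin (H + 1) → S) × (Fin H → A)

variable {S A : Type} {H : ℕ}

/-- The set of time-augmented states visited by `τ` up to step `j`. -/
def visitedUpTo [DecidableEq S] (τ : Traj S A H) (j : Fin (H + 1)) :
    Finset (Fin (H + 1) × S) :=
  (Finset.univ.filter fun l => l ≤ j).image fun l => (l, τ.1 l)

/-- The set of time-augmented states visited by the whole trajectory `τ`. -/
def visitedAll [DecidableEq S] (τ : Traj S A H) : Finset (Fin (H + 1) × S) :=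
  Finset.univ.image fun l => (l, τ.1 l)

/-- Probability of trajectory `τ` under a Markovian policy table `π`. -/
def trajProb (ρ : S → ℝ) (P : Fin H → S → A → S → ℝ) (π : Fin H → S → A → ℝ)
    (τ : Traj S A H) : ℝ :=
  ρ (τ.1 0) *
    ∏ h : Fin H, π h (τ.1 h.castSucc) (τ.2 h) * P h (τ.1 h.castSucc) (τ.2 h) (τ.1 h.succ)

/-- The objective `J(π) = ∑_τ f(τ;π) · F(τ)`. -/
def Jobj [Fintype S] [Fintype A] [DecidableEq S] (ρ : S → ℝ) (P : Fin H → S → A → S → ℝ)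
    (F : Finset (Fin (H + 1) × S) → ℝ) (π : Fin H → S → A → ℝ) : ℝ :=
  ∑ τ : Traj S A H, trajProb ρ P π τ * F (visitedAll τ)

/-- `π` is a (stochastic) Markovian policy. -/
def IsMarkovPolicy [Fintype A] (π : Fin H → S → A → ℝ) : Prop :=
  (∀ h s a, 0 ≤ π h s a) ∧ ∀ h s, ∑ a : A, π h s a = 1

/-- `π` is a deterministic Markovian policy. -/
def IsDetMarkovPolicy [Fintype A] (π : Fin H → S → A → ℝ) : Prop :=
  IsMarkovPolicy π ∧ ∀ h s, ∃ a, π h s a = 1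

/-- A history-dependent policy: at step `h`, given the prefix
`((s 0, a 0), …, (s (h−1), a (h−1)), s h)`, a weight for each action. -/
abbrev HistPolicy (S A : Type) (H : ℕ) : Type :=
  (h : Fin H) → ((Fin h.1 → S × A) × S) → A → ℝ

/-- The prefix of trajectory `τ` up to step `h`. -/
def prefixOf (τ : Traj S A H) (h : Fin H) : (Fin h.1 → S × A) × S :=
  (fun l => (τ.1 ⟨l.1, by have := l.2; have := h.2; omega⟩,
             τ.2 ⟨l.1, by have := l.2; have := h.2; omega⟩),
   τ.1 h.castSucc)

/-- Probability of trajectory `τ` under a history-dependent policy `π`. -/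
def trajProbHist (ρ : S → ℝ) (P : Fin H → S → A → S → ℝ) (π : HistPolicy S A H)
    (τ : Traj S A H) : ℝ :=
  ρ (τ.1 0) *
    ∏ h : Fin H, π h (prefixOf τ h) (τ.2 h) * P h (τ.1 h.castSucc) (τ.2 h) (τ.1 h.succ)

/-- The objective for history-dependent policies. -/
def JobjHist [Fintype S] [Fintype A] [DecidableEq S] (ρ : S → ℝ)
    (P : Fin H → S → A → S → ℝ) (F : Finset (Fin (H + 1) × S) → ℝ)
    (π : HistPolicy S A H) : ℝ :=
  ∑ τ : Traj S A H, trajProbHist ρ P π τ * F (visitedAll τ)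

/-- `π` is a (stochastic) history-dependent policy. -/
def IsHistPolicy [Fintype A] (π : HistPolicy S A H) : Prop :=
  (∀ h pre a, 0 ≤ π h pre a) ∧ ∀ h pre, ∑ a : A, π h pre a = 1

/-- `π` is a deterministic history-dependent policy. -/
def IsDetHistPolicy [Fintype A] (π : HistPolicy S A H) : Prop :=
  IsHistPolicy π ∧ ∀ h pre, ∃ a, π h pre a = 1

/-!
By the likelihood-ratio trick, `∇J(θ₀) = E[F(τ) · ∑ᵢ ∇ log π(aᵢ | sᵢ)]`. Telescoping the marginal
gains turns `∑_{j ≥ i} (F(τ_{0:j+1}) − F(τ_{0:j}))` into `F(τ) − F(τ_{0:i})`, so the claimed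
derivative differs from the REINFORCE one by terms `E[c(prefixᵢ τ) · ∇ log π(aᵢ | sᵢ)]` with `c`
determined by the prefix up to step `i`. Each such term vanishes: conditioned on the prefix, the
tail of the trajectory has total mass one, and `∑ₐ π(a | s) ∇ log π(a | s) = ∇ ∑ₐ π(a | s) = 0`.
-/

open Function

theorem Fin.sum_filter_le_sub {M : Type*} [AddCommGroup M] {n : ℕ} (a : Fin n)
    (f : Fin (n + 1) → M) :
    ∑ i ∈ univ.filter (a ≤ ·), (f i.succ - f i.castSucc) = f (Fin.last n) - f a.castSucc := by
  obtain ⟨m, rfl⟩ : ∃ m, n = m + 1 := Nat.exists_eq_succ_of_ne_zero a.pos.ne'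
  rw [filter_le_eq_Ici, ← Icc_top, Fin.sum_Icc_sub le_top]
  rfl

theorem HasFDerivAt.finset_prod_of_ne_zero {ι 𝕜 E : Type*} [NontriviallyNormedField 𝕜]
    [NormedAddCommGroup E] [NormedSpace 𝕜 E] [DecidableEq ι] {s : Finset ι} {f : ι → E → 𝕜}
    {f' : ι → E →L[𝕜] 𝕜} {x : E} (hf : ∀ i ∈ s, HasFDerivAt (f i) (f' i) x)
    (hx : ∀ i ∈ s, f i x ≠ 0) :
    HasFDerivAt (fun y => ∏ i ∈ s, f i y) ((∏ i ∈ s, f i x) • ∑ i ∈ s, (f i x)⁻¹ • f' i) x := by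
  refine (HasFDerivAt.finsetProd hf).congr_fderiv ?_
  rw [smul_sum]
  refine sum_congr rfl fun i hi => ?_
  rw [smul_smul, ← mul_prod_erase s _ hi, mul_comm (f i x), mul_assoc, mul_inv_cancel₀ (hx i hi),
    mul_one]

theorem HasFDerivAt.sum_eq_zero_of_sum_eq_const {ι 𝕜 E F : Type*} [NontriviallyNormedField 𝕜]
    [NormedAddCommGroup E] [NormedSpace 𝕜 E] [NormedAddCommGroup F] [NormedSpace 𝕜 F]
    {s : Finset ι} {f : ι → E → F} {f' : ι → E →L[𝕜] F} {x : E}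
    (hf : ∀ i ∈ s, HasFDerivAt (f i) (f' i) x) {c : F} (hc : ∀ y, ∑ i ∈ s, f i y = c) :
    ∑ i ∈ s, f' i = 0 := by
  have hsum := HasFDerivAt.fun_sum hf
  simp only [hc] at hsum
  exact hsum.unique (hasFDerivAt_const c x)

theorem trajProb_cons {n : ℕ} (ρ : S → ℝ) (P : Fin (n + 1) → S → A → S → ℝ)
    (π : Fin (n + 1) → S → A → ℝ) (s₀ : S) (a₀ : A) (τ : Traj S A n) :
    trajProb ρ P π (Fin.cons s₀ τ.1, Fin.cons a₀ τ.2) =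
      ρ s₀ * π 0 s₀ a₀ * trajProb (P 0 s₀ a₀) (fun h => P h.succ) (fun h => π h.succ) τ := by
  simp only [trajProb, Fin.prod_univ_succ, Fin.cons_zero, Fin.cons_succ, Fin.castSucc_zero,
    ← Fin.succ_castSucc]
  ring

theorem prefixOf_zero {n : ℕ} (τ : Traj S A (n + 1)) : prefixOf τ 0 = (Fin.elim0, τ.1 0) :=
  Prod.ext (funext fun l => Fin.elim0 l) rfl

theorem prefixOf_cons_succ {n : ℕ} (s₀ : S) (a₀ : A) (τ : Traj S A n) (i : Fin n) :
    prefixOf ((Fin.cons s₀ τ.1, Fin.cons a₀ τ.2) : Traj S A (n + 1)) i.succ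
      = (Fin.cons (s₀, a₀) (prefixOf τ i).1, (prefixOf τ i).2) := by
  refine Prod.ext (funext fun l => ?_) rfl
  cases l using Fin.cases <;> rfl

theorem visitedUpTo_last [DecidableEq S] (τ : Traj S A H) :
    visitedUpTo τ (Fin.last H) = visitedAll τ := by
  rw [visitedUpTo, visitedAll, filter_true_of_mem fun l _ => Fin.le_last l]

theorem sum_marginal_gains_eq_sub [DecidableEq S] (F : Finset (Fin (H + 1) × S) → ℝ)
    (τ : Traj S A H) (i : Fin H) :
    ∑ j ∈ univ.filter (i ≤ ·), (F (visitedUpTo τ j.succ) - F (visitedUpTo τ j.castSucc)) =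
      F (visitedAll τ) - F (visitedUpTo τ i.castSucc) := by
  rw [Fin.sum_filter_le_sub i fun j => F (visitedUpTo τ j), visitedUpTo_last]

theorem visitedUpTo_castSucc_factorsThrough [DecidableEq S] (i : Fin H) :
    (fun τ : Traj S A H => visitedUpTo τ i.castSucc).FactorsThrough (prefixOf · i) := by
  intro τ τ' h
  refine image_congr fun l hl => ?_
  have hl : l ≤ i.castSucc := (mem_filter.mp hl).2
  suffices τ.1 l = τ'.1 l by simp only [this]
  rcases hl.lt_or_eq with hlt | rfl
  · exact congrArg (fun pre => (pre.1 ⟨l.1, hlt⟩).1) h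
  · exact congrArg Prod.snd h

theorem hasFDerivAt_trajProb {E : Type*} [NormedAddCommGroup E] [NormedSpace ℝ E]
    (ρ : S → ℝ) (P : Fin H → S → A → S → ℝ) {π : E → Fin H → S → A → ℝ}
    {D : Fin H → S → A → E →L[ℝ] ℝ} {θ₀ : E}
    (hdiff : ∀ h s a, HasFDerivAt (fun θ => π θ h s a) (D h s a) θ₀)
    (hne : ∀ h s a, π θ₀ h s a ≠ 0) (τ : Traj S A H) :
    HasFDerivAt (fun θ => trajProb ρ P (π θ) τ)
      (trajProb ρ P (π θ₀) τ •
        ∑ i, (π θ₀ i (τ.1 i.castSucc) (τ.2 i))⁻¹ • D i (τ.1 i.castSucc) (τ.2 i)) θ₀ := by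
  have hprod := HasFDerivAt.finset_prod_of_ne_zero (s := univ)
    (fun h _ => hdiff h (τ.1 h.castSucc) (τ.2 h)) (fun h _ => hne _ _ _)
  have htraj : (fun θ => trajProb ρ P (π θ) τ) = fun θ => ρ (τ.1 0) *
      ((∏ h, π θ h (τ.1 h.castSucc) (τ.2 h)) * ∏ h, P h (τ.1 h.castSucc) (τ.2 h) (τ.1 h.succ)) :=
    funext fun θ => by rw [trajProb, prod_mul_distrib]
  rw [htraj]
  refine ((hprod.mul_const _).const_mul _).congr_fderiv ?_
  rw [trajProb, prod_mul_distrib, smul_smul, smul_smul]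
  ring_nf

section Trajectories

variable [Fintype S] [Fintype A]

theorem sum_traj_succ {M : Type*} [AddCommMonoid M] {n : ℕ} (f : Traj S A (n + 1) → M) :
    ∑ τ, f τ = ∑ s₀ : S, ∑ a₀ : A, ∑ τ : Traj S A n, f (Fin.cons s₀ τ.1, Fin.cons a₀ τ.2) := by
  rw [Fintype.sum_prod_type, ← (Fin.consEquiv fun _ => S).sum_comp, Fintype.sum_prod_type]
  refine sum_congr rfl fun s₀ _ => ?_
  rw [sum_comm, ← (Fin.consEquiv fun _ => A).sum_comp, Fintype.sum_prod_type]
  refine sum_congr rfl fun a₀ _ => ?_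
  rw [sum_comm, Fintype.sum_prod_type]
  rfl

theorem sum_trajProb {n : ℕ} (ρ : S → ℝ) {P : Fin n → S → A → S → ℝ} {π : Fin n → S → A → ℝ}
    (hπ : ∀ h s, ∑ a, π h s a = 1) (hP : ∀ h s a, ∑ s', P h s a s' = 1) :
    ∑ τ : Traj S A n, trajProb ρ P π τ = ∑ s, ρ s := by
  induction n generalizing ρ with
  | zero =>
    simp only [trajProb, Fintype.sum_prod_type, univ_eq_empty, prod_empty, mul_one, sum_const,
      card_univ, Fintype.card_unique, one_smul]
    exact (Equiv.funUnique (Fin 1) S).sum_comp ρ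
  | succ n ih =>
    rw [sum_traj_succ]
    simp only [trajProb_cons, ← mul_sum, ih _ (fun h => hπ h.succ) (fun h => hP h.succ), hP,
      mul_one, hπ]

/- Induction on the horizon: peeling off `(s₀, a₀)` leaves a trajectory started from
`P 0 s₀ a₀`, and at `i = 0` the tail sums to one, leaving `∑ₐ π 0 s₀ a • u s₀ a = 0`. -/
theorem sum_trajProb_smul_prefix_smul_eq_zero {M : Type*} [AddCommGroup M] [Module ℝ M] {n : ℕ}
    (ρ : S → ℝ) {P : Fin n → S → A → S → ℝ} {π : Fin n → S → A → ℝ}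
    (hπ : ∀ h s, ∑ a, π h s a = 1) (hP : ∀ h s a, ∑ s', P h s a s' = 1) (i : Fin n)
    (g : (Fin i.1 → S × A) × S → ℝ) {u : S → A → M} (hu : ∀ s, ∑ a, π i s a • u s a = 0) :
    ∑ τ : Traj S A n, trajProb ρ P π τ • (g (prefixOf τ i) • u (τ.1 i.castSucc) (τ.2 i)) = 0 := by
  induction n generalizing ρ with
  | zero => exact i.elim0
  | succ n ih =>
    rw [sum_traj_succ]
    induction i using Fin.cases with
    | zero =>
      simp only [trajProb_cons, prefixOf_zero, Fin.castSucc_zero, Fin.cons_zero, ← sum_smul,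
        ← mul_sum, sum_trajProb _ (fun h => hπ h.succ) (fun h => hP h.succ), hP, mul_one]
      refine sum_eq_zero fun s₀ _ => ?_
      calc ∑ a₀, (ρ s₀ * π 0 s₀ a₀) • (g (Fin.elim0, s₀) • u s₀ a₀)
          = (ρ s₀ * g (Fin.elim0, s₀)) • ∑ a₀, π 0 s₀ a₀ • u s₀ a₀ := by
            rw [smul_sum]
            exact sum_congr rfl fun a₀ _ => by module
        _ = 0 := by rw [hu, smul_zero]
    | succ j =>
      simp only [trajProb_cons, prefixOf_cons_succ, ← Fin.succ_castSucc, Fin.cons_succ, mul_smul,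
        ← smul_sum]
      refine sum_eq_zero fun s₀ _ => smul_eq_zero_of_right _ <| sum_eq_zero fun a₀ _ =>
        smul_eq_zero_of_right _ ?_
      exact ih (P 0 s₀ a₀) (fun h => hπ h.succ) (fun h => hP h.succ) j
        (fun pre => g (Fin.cons (s₀, a₀) pre.1, pre.2)) hu

theorem sum_trajProb_smul_smul_eq_zero {M : Type*} [AddCommGroup M] [Module ℝ M]
    (ρ : S → ℝ) {P : Fin H → S → A → S → ℝ} {π : Fin H → S → A → ℝ}
    (hπ : ∀ h s, ∑ a, π h s a = 1) (hP : ∀ h s a, ∑ s', P h s a s' = 1) (i : Fin H)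
    {c : Traj S A H → ℝ} (hc : c.FactorsThrough (prefixOf · i)) {u : S → A → M}
    (hu : ∀ s, ∑ a, π i s a • u s a = 0) :
    ∑ τ : Traj S A H, trajProb ρ P π τ • (c τ • u (τ.1 i.castSucc) (τ.2 i)) = 0 := by
  rw [← sum_trajProb_smul_prefix_smul_eq_zero ρ hπ hP i (extend (prefixOf · i) c 0) hu]
  exact sum_congr rfl fun τ _ => by rw [hc.extend_apply]

theorem sum_trajProb_smul_sum_sub_baseline {M : Type*} [AddCommGroup M] [Module ℝ M]
    (ρ : S → ℝ) {P : Fin H → S → A → S → ℝ} {π : Fin H → S → A → ℝ}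
    (hπ : ∀ h s, ∑ a, π h s a = 1) (hP : ∀ h s a, ∑ s', P h s a s' = 1) (R : Traj S A H → ℝ)
    {c : Fin H → Traj S A H → ℝ} (hc : ∀ i, (c i).FactorsThrough (prefixOf · i))
    {u : Fin H → S → A → M} (hu : ∀ i s, ∑ a, π i s a • u i s a = 0) :
    ∑ τ, trajProb ρ P π τ • ∑ i, (R τ - c i τ) • u i (τ.1 i.castSucc) (τ.2 i) =
      ∑ τ, trajProb ρ P π τ • (R τ • ∑ i, u i (τ.1 i.castSucc) (τ.2 i)) := by
  simp only [sub_smul, sum_sub_distrib, smul_sub, ← smul_sum]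
  rw [sub_eq_self]
  simp only [smul_sum]
  rw [sum_comm]
  exact sum_eq_zero fun i _ => sum_trajProb_smul_smul_eq_zero ρ hπ hP i (hc i) (hu i)

theorem hasFDerivAt_Jobj [DecidableEq S] {E : Type*} [NormedAddCommGroup E] [NormedSpace ℝ E]
    (ρ : S → ℝ) (P : Fin H → S → A → S → ℝ) (F : Finset (Fin (H + 1) × S) → ℝ)
    {π : E → Fin H → S → A → ℝ} {D : Fin H → S → A → E →L[ℝ] ℝ} {θ₀ : E}
    (hdiff : ∀ h s a, HasFDerivAt (fun θ => π θ h s a) (D h s a) θ₀)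
    (hne : ∀ h s a, π θ₀ h s a ≠ 0) :
    HasFDerivAt (fun θ => Jobj ρ P F (π θ))
      (∑ τ, trajProb ρ P (π θ₀) τ • (F (visitedAll τ) •
        ∑ i, (π θ₀ i (τ.1 i.castSucc) (τ.2 i))⁻¹ • D i (τ.1 i.castSucc) (τ.2 i))) θ₀ :=
  HasFDerivAt.fun_sum fun τ _ =>
    ((hasFDerivAt_trajProb ρ P hdiff hne τ).mul_const _).congr_fderiv (smul_comm _ _ _)

end Trajectories

theorem policy_gradient_marginal_gains_general
    (S A : Type) [Fintype S] [Fintype A] [DecidableEq S]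
    (H : ℕ)
    (ρ : S → ℝ)
    (P : Fin H → S → A → S → ℝ)
    (hP1 : ∀ h s a, ∑ s' : S, P h s a s' = 1)
    (F : Finset (Fin (H + 1) × S) → ℝ)
    (d : ℕ) (π : (Fin d → ℝ) → Fin H → S → A → ℝ) (θ₀ : Fin d → ℝ)
    (D : Fin H → S → A → ((Fin d → ℝ) →L[ℝ] ℝ))
    (hdiff : ∀ h s a, HasFDerivAt (fun θ => π θ h s a) (D h s a) θ₀)
    (hpos : ∀ h s a, 0 < π θ₀ h s a)
    (hsum : ∀ (θ : Fin d → ℝ) h s', ∑ a : A, π θ h s' a = 1)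
    (b : (i : Fin H) → ((Fin i.1 → S × A) × S) → ℝ) :
    HasFDerivAt (fun θ => Jobj ρ P F (π θ))
      (∑ τ : Traj S A H,
        trajProb ρ P (π θ₀) τ •
          ∑ i : Fin H,
            ((∑ j ∈ Finset.univ.filter fun j : Fin H => i ≤ j,
                (F (visitedUpTo τ j.succ) - F (visitedUpTo τ j.castSucc)))
              - b i (prefixOf τ i)) •
              ((π θ₀ i (τ.1 i.castSucc) (τ.2 i))⁻¹ • D i (τ.1 i.castSucc) (τ.2 i)))
      θ₀ := by
  have hne : ∀ h s a, π θ₀ h s a ≠ 0 := fun h s a => (hpos h s a).ne'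
  have hscore : ∀ i s, ∑ a, π θ₀ i s a • ((π θ₀ i s a)⁻¹ • D i s a) = 0 := fun i s => by
    simp only [smul_inv_smul₀ (hne i s _)]
    exact HasFDerivAt.sum_eq_zero_of_sum_eq_const (fun a _ => hdiff i s a) (hsum · i s)
  have hbaseline : ∀ i, FactorsThrough
      (fun τ : Traj S A H => F (visitedUpTo τ i.castSucc) + b i (prefixOf τ i)) (prefixOf · i) :=
    fun i _ _ h => by simp only [visitedUpTo_castSucc_factorsThrough i h, h]
  refine (hasFDerivAt_Jobj ρ P F hdiff hne).congr_fderiv ?_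
  rw [← sum_trajProb_smul_sum_sub_baseline ρ (hsum θ₀) hP1 (fun τ => F (visitedAll τ)) hbaseline
    hscore]
  simp only [sum_marginal_gains_eq_sub, sub_sub]

/-- **Theorem 4.1.** Policy gradient with marginal gains: for any baseline
`b` on trajectory prefixes, `θ ↦ J(θ)` is Fréchet-differentiable at `θ₀` with derivative
`∑_τ f(τ; π θ₀) • ∑_i (∑_{j≥i} (F(τ_{0:j+1}) − F(τ_{0:j})) − b(prefix_i τ)) •
((π θ₀ i (s i) (a i))⁻¹ • D i (s i) (a i))`. -/
theorem policy_gradient_marginal_gains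
    (S A : Type) [Fintype S] [Fintype A] [DecidableEq S] [Nonempty S] [Nonempty A]
    (H : ℕ) (hH : 1 ≤ H)
    (ρ : S → ℝ) (hρ0 : ∀ s, 0 ≤ ρ s) (hρ1 : ∑ s : S, ρ s = 1)
    (P : Fin H → S → A → S → ℝ)
    (hP0 : ∀ h s a s', 0 ≤ P h s a s') (hP1 : ∀ h s a, ∑ s' : S, P h s a s' = 1)
    (F : Finset (Fin (H + 1) × S) → ℝ)
    (d : ℕ) (π : (Fin d → ℝ) → Fin H → S → A → ℝ) (θ₀ : Fin d → ℝ)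
    (D : Fin H → S → A → ((Fin d → ℝ) →L[ℝ] ℝ))
    (hdiff : ∀ h s a, HasFDerivAt (fun θ => π θ h s a) (D h s a) θ₀)
    (hpos : ∀ h s a, 0 < π θ₀ h s a)
    (hsum : ∀ (θ : Fin d → ℝ) h s', ∑ a : A, π θ h s' a = 1)
    (b : (i : Fin H) → ((Fin i.1 → S × A) × S) → ℝ) :
    HasFDerivAt (fun θ => Jobj ρ P F (π θ))
      (∑ τ : Traj S A H,
        trajProb ρ P (π θ₀) τ •
          ∑ i : Fin H,
            ((∑ j ∈ Finset.univ.filter fun j : Fin H => i ≤ j,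
                (F (visitedUpTo τ j.succ) - F (visitedUpTo τ j.castSucc)))
              - b i (prefixOf τ i)) •
              ((π θ₀ i (τ.1 i.castSucc) (τ.2 i))⁻¹ • D i (τ.1 i.castSucc) (τ.2 i)))
      θ₀ :=
  policy_gradient_marginal_gains_general S A H ρ P hP1 F d π θ₀ D hdiff hpos hsum b
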